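/- arXiv:0904.1915 — 2 statements merged into one kernel-verified Lean document; each statement's English description precedes it below -/
import Mathlib

section
/- Let G be a connected graph, v0 a vertex, i ≥ 0, r ≥ 0, and let C be a connected component of the induced subgraph on the annulus G[i,i+2r]. Let w_1,...,w_l be the vertices of C at distance exactly i from v0. Form the graph C* by adding a new vertex v* adjacent to each of w_1,...,w_l. Then C* is connected and every vertex of C* is at distance at most 2r+1 from v*. -/
variable {V : Type*}

/-- The graph `C*` obtained from the induced subgraph of `G` on a set `C` by adding a
virtual vertex (`none`) adjacent to exactly the vertices of `C` at distance `i` from `v0`. -/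
def virtualExtension (G : SimpleGraph V) (C : Set V) (v0 : V) (i : ℕ) :
    SimpleGraph (Option C) where
  Adj x y :=
    match x, y with
    | some u, some w => G.Adj u w
    | some u, none => G.dist v0 u = i
    | none, some w => G.dist v0 w = i
    | none, none => False
  symm := by
    constructor
    intro x y h
    match x, y with
    | some u, some w => exact h.symm
    | some u, none => exact h
    | none, some w => exact h
    | none, none => exact h
  loopless := by
    constructor
    intro x h
    match x with
    | some u => exact G.irrefl h
    | none => exact h

/-! Following a shortest path from `v0` backwards, a vertex of `C` at distance `i + k` from `v0`
steps down one distance layer at a time; the annulus condition and the closure of `C` under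
adjacency within the annulus keep every step inside `C`, and after `k` steps the path reaches a
neighbour of the virtual vertex. Hence every vertex of `C*` is joined to `v*` by a walk of length
at most `2r + 1`, which gives both connectedness and the distance bound. -/

namespace SimpleGraph

lemma Connected.exists_adj_dist_eq_of_dist_eq_add_one {G : SimpleGraph V} (hG : G.Connected)
    {u v : V} {d : ℕ} (h : G.dist u v = d + 1) : ∃ w, G.Adj w v ∧ G.dist u w = d := by
  obtain ⟨p, hp⟩ := hG.exists_walk_length_eq_dist u v
  have hnil : ¬p.Nil := fun hn => by simp [hn.length_eq_zero, h] at hp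
  refine ⟨p.penultimate, p.adj_penultimate hnil, le_antisymm ?_ ?_⟩
  · have := dist_le p.dropLast
    have := p.length_dropLast_add_one hnil
    omega
  · have : G.dist u v ≤ G.dist u p.penultimate + G.dist p.penultimate v := hG.dist_triangle
    have : G.dist p.penultimate v = 1 := dist_eq_one_iff_adj.mpr (p.adj_penultimate hnil)
    omega

end SimpleGraph

open SimpleGraph

lemma virtualExtension_exists_walk_from_none {G : SimpleGraph V} (hG : G.Connected) {v0 : V}
    {i r : ℕ} {C : Set V} (hCA : ∀ v ∈ C, i ≤ G.dist v0 v ∧ G.dist v0 v ≤ i + 2 * r)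
    (hmax : ∀ u ∈ C, ∀ w : V, (i ≤ G.dist v0 w ∧ G.dist v0 w ≤ i + 2 * r) →
      G.Adj u w → w ∈ C)
    (v : C) : ∃ p : (virtualExtension G C v0 i).Walk none (some v),
      p.length + i = G.dist v0 v + 1 := by
  obtain ⟨k, hk⟩ := Nat.exists_eq_add_of_le (hCA v v.2).1
  induction k generalizing v with
  | zero =>
    have hadj : (virtualExtension G C v0 i).Adj none (some v) := hk
    exact ⟨.cons hadj .nil, by simp only [Walk.length_cons, Walk.length_nil, hk]; omega⟩
  | succ k ih =>
    obtain ⟨u, hu, hdu⟩ := hG.exists_adj_dist_eq_of_dist_eq_add_one (d := i + k) hk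
    have huC : u ∈ C := hmax v v.2 u ⟨by omega, by have := (hCA v v.2).2; omega⟩ hu.symm
    obtain ⟨p, hp⟩ := ih ⟨u, huC⟩ hdu
    have hadj : (virtualExtension G C v0 i).Adj (some ⟨u, huC⟩) (some v) := hu
    exact ⟨p.concat hadj, by rw [Walk.length_concat]; simp only at hp; omega⟩

theorem virtualExtension_connected_and_bounded_general {V : Type*}
    (G : SimpleGraph V) (hG : G.Connected) (v0 : V) (i r : ℕ) (C : Set V)
    (hCA : ∀ v ∈ C, i ≤ G.dist v0 v ∧ G.dist v0 v ≤ i + 2 * r)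
    (hmax : ∀ u ∈ C, ∀ w : V, (i ≤ G.dist v0 w ∧ G.dist v0 w ≤ i + 2 * r) →
      G.Adj u w → w ∈ C) :
    (virtualExtension G C v0 i).Connected ∧
      ∀ x : Option C, (virtualExtension G C v0 i).dist none x ≤ 2 * r + 1 := by
  have short_walk : ∀ x : Option C,
      ∃ p : (virtualExtension G C v0 i).Walk none x, p.length ≤ 2 * r + 1
    | none => ⟨.nil, by simp⟩
    | some v => by
      obtain ⟨p, hp⟩ := virtualExtension_exists_walk_from_none hG hCA hmax v
      exact ⟨p, by have := (hCA v v.2).2; omega⟩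
  refine ⟨(connected_iff_exists_forall_reachable _).2 ⟨none, fun x => ?_⟩, fun x => ?_⟩
  · obtain ⟨p, -⟩ := short_walk x
    exact p.reachable
  · obtain ⟨p, hp⟩ := short_walk x
    exact (dist_le p).trans hp

/-- if `C` is a connected component of the induced subgraph of a connected
graph `G` on the annulus `G[i,i+2r]`, then the graph `C*` obtained by adding a virtual
vertex `v*` adjacent to the vertices of `C` at distance `i` from `v0` is connected, and
every vertex of `C*` is at distance at most `2r+1` from `v*`. -/
theorem virtualExtension_connected_and_bounded {V : Type*} [Fintype V]
    (G : SimpleGraph V) (hG : G.Connected) (v0 : V) (i r : ℕ) (C : Set V)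
    (hCA : ∀ v ∈ C, i ≤ G.dist v0 v ∧ G.dist v0 v ≤ i + 2 * r)
    (hne : C.Nonempty)
    (hconn : (G.induce C).Connected)
    (hmax : ∀ u ∈ C, ∀ w : V, (i ≤ G.dist v0 w ∧ G.dist v0 w ≤ i + 2 * r) →
      G.Adj u w → w ∈ C) :
    (virtualExtension G C v0 i).Connected ∧
      ∀ x : Option C, (virtualExtension G C v0 i).dist none x ≤ 2 * r + 1 :=
  virtualExtension_connected_and_bounded_general G hG v0 i r C hCA hmax
end

section
/- Let G=(V,E) be a connected graph with a BFS tree T rooted at v0, and let i, r ≥ 0. Let C be a connected component of the induced subgraph on G[i,i+2r], let w_1,...,w_l be the vertices of C at distance i from v0, and let B ≠ B_0 be any block (biconnected component) of C* (the graph C with virtual vertex v* attached to w_1,...,w_l) other than the block B_0 containing v*. Then there is a single index j such that every vertex of B is a descendant of w_j in the BFS tree T. -/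
variable {V : Type*}

/-- A set of vertices is biconnected in `H` if it induces a connected subgraph that
remains preconnected after removing any single vertex (i.e. it has no cut vertex). -/
def IsBiconnectedSet {α : Type*} (H : SimpleGraph α) (B : Set α) : Prop :=
  (H.induce B).Connected ∧ ∀ x ∈ B, (H.induce (B \ {x})).Preconnected

/-- A block (biconnected component) of `H` is a maximal biconnected set of vertices. -/
def IsBlock {α : Type*} (H : SimpleGraph α) (B : Set α) : Prop :=
  IsBiconnectedSet H B ∧ ∀ B' : Set α, B ⊆ B' → IsBiconnectedSet H B' → B' = B

/-!
Following `par` from a vertex `x` of `C` reaches its unique ancestor at depth `i`, and the whole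
ancestor chain stays in `C`, because `C` is closed under adjacency inside the annulus. If two
adjacent vertices `u`, `v` of the block `B` had different depth-`i` ancestors, their ancestor
chains would be disjoint, and together with the edge `uv` and the virtual vertex `v*` they would
form a cycle of `C*`. A cycle is biconnected and meets `B` in the two vertices `u`, `v`, so by
maximality of `B` it lies in `B`, forcing `v* ∈ B`. Hence the depth-`i` ancestor is constant
along the edges of `B`, and so on all of `B`, which is connected.
-/

namespace SimpleGraph

variable {α : Type*} {H : SimpleGraph α}

theorem preconnected_induce_of_isChain {l : List α} (hl : l.IsChain H.Adj) :
    (H.induce {x | x ∈ l}).Preconnected := by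
  rcases eq_or_ne l [] with rfl | hne
  · rintro ⟨x, hx⟩
    simp at hx
  · have h := (Walk.ofSupport l hne hl).connected_induce_support.preconnected
    rwa [Walk.support_ofSupport] at h

theorem eq_of_preconnected_induce {β : Type*} {S : Set α} (hS : (H.induce S).Preconnected)
    {f : α → β} (hf : ∀ x ∈ S, ∀ y ∈ S, H.Adj x y → f x = f y)
    {x y : α} (hx : x ∈ S) (hy : y ∈ S) : f x = f y := by
  suffices h : ∀ a b : S, (H.induce S).Reachable a b → f a = f b from h ⟨x, hx⟩ ⟨y, hy⟩ (hS _ _)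
  rintro a b ⟨w⟩
  induction w with
  | nil => rfl
  | cons h _ ih => exact (hf _ (Subtype.prop _) _ (Subtype.prop _) h).trans ih

end SimpleGraph

open SimpleGraph

section Blocks

variable {α : Type*} {H : SimpleGraph α}

theorem IsBiconnectedSet.preconnected_induce_diff_singleton {B : Set α}
    (hB : IsBiconnectedSet H B) (z : α) : (H.induce (B \ {z})).Preconnected := by
  by_cases hz : z ∈ B
  · exact hB.2 z hz
  · rw [Set.sdiff_singleton_eq_self hz]
    exact hB.1.preconnected

theorem IsBiconnectedSet.union {B₁ B₂ : Set α} (h₁ : IsBiconnectedSet H B₁)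
    (h₂ : IsBiconnectedSet H B₂) {x y : α} (hx : x ∈ B₁ ∩ B₂) (hy : y ∈ B₁ ∩ B₂)
    (hxy : x ≠ y) : IsBiconnectedSet H (B₁ ∪ B₂) := by
  refine ⟨induce_union_connected h₁.1.preconnected h₂.1.preconnected ⟨x, hx⟩, fun z _ => ?_⟩
  have hcommon : ((B₁ \ {z}) ∩ (B₂ \ {z})).Nonempty := by
    by_cases hxz : x = z
    · exact ⟨y, ⟨hy.1, fun h => hxy (hxz.trans h.symm)⟩, hy.2, fun h => hxy (hxz.trans h.symm)⟩
    · exact ⟨x, ⟨hx.1, hxz⟩, hx.2, hxz⟩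
  rw [Set.union_sdiff_distrib]
  exact (induce_union_connected (h₁.preconnected_induce_diff_singleton z)
    (h₂.preconnected_induce_diff_singleton z) hcommon).preconnected

theorem IsBlock.subset_of_isBiconnectedSet {B S : Set α} (hB : IsBlock H B)
    (hS : IsBiconnectedSet H S) {x y : α} (hx : x ∈ B ∩ S) (hy : y ∈ B ∩ S) (hxy : x ≠ y) :
    S ⊆ B := by
  rw [← hB.2 _ Set.subset_union_left (hB.1.union hS hx hy hxy)]
  exact Set.subset_union_right

theorem isBiconnectedSet_of_isChain_cycle {z : α} {l : List α} (hnd : (z :: l).Nodup)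
    (hc : (z :: l ++ [z]).IsChain H.Adj) : IsBiconnectedSet H {x | x ∈ z :: l} := by
  have hpath : (H.induce {x | x ∈ z :: l}).Preconnected :=
    preconnected_induce_of_isChain (hc.infix ⟨[], [z], by simp⟩)
  refine ⟨(connected_iff _).2 ⟨hpath, ⟨z, List.mem_cons_self⟩⟩, fun x hx => ?_⟩
  rw [List.nodup_cons] at hnd
  rcases List.mem_cons.1 hx with rfl | hxl
  · have hset : {y | y ∈ x :: l} \ {x} = {y | y ∈ l} := by
      ext y
      simp only [Set.mem_sdiff, Set.mem_ofPred_eq, List.mem_cons, Set.mem_singleton_iff]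
      aesop
    rw [hset]
    exact preconnected_induce_of_isChain (hc.infix ⟨[x], [x], by simp⟩)
  · obtain ⟨s, t, rfl⟩ := List.append_of_mem hxl
    have hxz : x ≠ z := fun h => hnd.1 (h ▸ hxl)
    have hxst : x ∉ s ++ t := (List.nodup_cons.1 (List.nodup_middle.1 hnd.2)).1
    -- Removing `x` cuts the cycle into two arcs, both ending at `z`.
    have hset : {y | y ∈ z :: (s ++ x :: t)} \ {x} = {y | y ∈ z :: s} ∪ {y | y ∈ t ++ [z]} := by
      ext y
      simp only [Set.mem_sdiff, Set.mem_union, Set.mem_ofPred_eq, Set.mem_singleton_iff,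
        List.mem_cons, List.mem_append]
      aesop
    rw [hset]
    have hleft : (H.induce {y | y ∈ z :: s}).Preconnected :=
      preconnected_induce_of_isChain (hc.infix ⟨[], x :: (t ++ [z]), by simp⟩)
    have hright : (H.induce {y | y ∈ t ++ [z]}).Preconnected :=
      preconnected_induce_of_isChain (hc.infix ⟨z :: s ++ [x], [], by simp⟩)
    exact (induce_union_connected hleft hright ⟨z, by simp, by simp⟩).preconnected

end Blocks

/-- `par` is the parent function of a BFS tree of `G` rooted at `v0`. -/
structure IsBFSParent (G : SimpleGraph V) (v0 : V) (par : V → V) : Prop where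
  adj : ∀ v : V, v ≠ v0 → G.Adj (par v) v
  dist : ∀ v : V, v ≠ v0 → G.dist v0 (par v) + 1 = G.dist v0 v

/-- Equal to `x` itself when `G.dist v0 x ≤ i` (truncated subtraction). -/
noncomputable def ancestorAtDepth (G : SimpleGraph V) (v0 : V) (par : V → V) (i : ℕ) (x : V) :
    V :=
  par^[G.dist v0 x - i] x

/-- The list `[x, par x, …, ancestorAtDepth G v0 par i x]`. -/
noncomputable def ancestorList (G : SimpleGraph V) (v0 : V) (par : V → V) (i : ℕ) (x : V) :
    List V :=
  List.iterate par x (G.dist v0 x - i + 1)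

section Ancestors

variable {G : SimpleGraph V} {v0 : V} {par : V → V} {i : ℕ} {x : V}

theorem head?_ancestorList : (ancestorList G v0 par i x).head? = some x := by
  simp [ancestorList, List.iterate]

theorem getLast?_ancestorList :
    (ancestorList G v0 par i x).getLast? = some (ancestorAtDepth G v0 par i x) := by
  rw [ancestorList, ← List.range_map_iterate, List.range_succ, List.map_append]
  simp [ancestorAtDepth]

namespace IsBFSParent

theorem dist_iterate (hT : IsBFSParent G v0 par) {k : ℕ} (hk : k ≤ G.dist v0 x) :
    G.dist v0 (par^[k] x) = G.dist v0 x - k := by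
  induction k with
  | zero => rfl
  | succ k ih =>
    have hdist := ih (by omega)
    have hne : par^[k] x ≠ v0 := by
      rintro h
      rw [h, dist_self] at hdist
      omega
    have := hT.dist _ hne
    rw [Function.iterate_succ_apply']
    omega

theorem adj_iterate (hT : IsBFSParent G v0 par) {k : ℕ} (hk : k < G.dist v0 x) :
    G.Adj (par^[k] x) (par^[k + 1] x) := by
  have hne : par^[k] x ≠ v0 := by
    intro h
    have hdist := hT.dist_iterate hk.le
    rw [h, dist_self] at hdist
    omega
  rw [Function.iterate_succ_apply']
  exact (hT.adj _ hne).symm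

theorem iterate_mem (hT : IsBFSParent G v0 par) {C : Set V} {j : ℕ}
    (hmax : ∀ u ∈ C, ∀ w : V, (i ≤ G.dist v0 w ∧ G.dist v0 w ≤ j) → G.Adj u w → w ∈ C)
    (hx : x ∈ C) (hxj : G.dist v0 x ≤ j) {k : ℕ} (hk : k + i ≤ G.dist v0 x) :
    par^[k] x ∈ C := by
  induction k with
  | zero => exact hx
  | succ k ih =>
    have := hT.dist_iterate (show k + 1 ≤ G.dist v0 x by omega)
    exact hmax _ (ih (by omega)) _ ⟨by omega, by omega⟩ (hT.adj_iterate (by omega))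

theorem dist_ancestorAtDepth (hT : IsBFSParent G v0 par) (hi : i ≤ G.dist v0 x) :
    G.dist v0 (ancestorAtDepth G v0 par i x) = i := by
  rw [ancestorAtDepth, hT.dist_iterate (by omega)]
  omega

theorem ancestorAtDepth_iterate (hT : IsBFSParent G v0 par) {k : ℕ}
    (hk : k + i ≤ G.dist v0 x) :
    ancestorAtDepth G v0 par i (par^[k] x) = ancestorAtDepth G v0 par i x := by
  rw [ancestorAtDepth, ancestorAtDepth, hT.dist_iterate (by omega), ← Function.iterate_add_apply]
  congr 1
  omega

theorem isChain_ancestorList (hT : IsBFSParent G v0 par) :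
    (ancestorList G v0 par i x).IsChain G.Adj := by
  rw [ancestorList, ← List.range_map_iterate, List.isChain_map, List.isChain_range_succ]
  exact fun k hk => hT.adj_iterate (by omega)

theorem nodup_ancestorList (hT : IsBFSParent G v0 par) : (ancestorList G v0 par i x).Nodup := by
  rw [ancestorList, ← List.range_map_iterate]
  refine List.nodup_range.map_on fun a ha b hb hab => ?_
  simp only [List.mem_range] at ha hb
  have hdist := congrArg (G.dist v0) hab
  rw [hT.dist_iterate (by omega), hT.dist_iterate (by omega)] at hdist
  omega

theorem ancestorAtDepth_of_mem_ancestorList (hT : IsBFSParent G v0 par) {y : V}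
    (hi : i ≤ G.dist v0 x) (hy : y ∈ ancestorList G v0 par i x) :
    ancestorAtDepth G v0 par i y = ancestorAtDepth G v0 par i x := by
  obtain ⟨k, hk, rfl⟩ := List.mem_iterate.1 hy
  exact hT.ancestorAtDepth_iterate (by omega)

theorem mem_of_mem_ancestorList (hT : IsBFSParent G v0 par) {C : Set V} {j : ℕ}
    (hmax : ∀ u ∈ C, ∀ w : V, (i ≤ G.dist v0 w ∧ G.dist v0 w ≤ j) → G.Adj u w → w ∈ C)
    (hx : x ∈ C) (hxj : G.dist v0 x ≤ j) (hi : i ≤ G.dist v0 x) {y : V}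
    (hy : y ∈ ancestorList G v0 par i x) : y ∈ C := by
  obtain ⟨k, hk, rfl⟩ := List.mem_iterate.1 hy
  exact hT.iterate_mem hmax hx hxj (by omega)

end IsBFSParent

end Ancestors

section VirtualExtension

variable {G : SimpleGraph V} {C : Set V} {v0 : V} {i : ℕ}

theorem partialInv_val_of_mem {x : V} (hx : x ∈ C) :
    Function.partialInv (Subtype.val : C → V) x = some ⟨x, hx⟩ :=
  Function.partialInv_left Subtype.val_injective ⟨x, hx⟩

theorem isBiconnectedSet_virtualExtension_of_path {L : List V} (hC : ∀ y ∈ L, y ∈ C)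
    (hnd : L.Nodup) (hL : L.IsChain G.Adj) {a b : V} (ha : L.head? = some a)
    (hb : L.getLast? = some b) (hda : G.dist v0 a = i) (hdb : G.dist v0 b = i) :
    IsBiconnectedSet (virtualExtension G C v0 i)
      {o | o ∈ none :: L.map (Function.partialInv (Subtype.val : C → V))} := by
  set f := Function.partialInv (Subtype.val : C → V)
  have hf : ∀ y (hy : y ∈ L), f y = some ⟨y, hC y hy⟩ := fun y hy => partialInv_val_of_mem _
  have haL : a ∈ L := List.mem_of_mem_head? ha
  have hbL : b ∈ L := List.mem_of_mem_getLast? hb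
  apply isBiconnectedSet_of_isChain_cycle
  · refine List.nodup_cons.2 ⟨fun h => ?_, hnd.map_on fun x hx y hy hxy => ?_⟩
    · obtain ⟨y, hy, hfy⟩ := List.mem_map.1 h
      rw [hf y hy] at hfy
      exact Option.some_ne_none _ hfy
    · rw [hf x hx, hf y hy] at hxy
      simpa using hxy
  · have hchain : (L.map f).IsChain (virtualExtension G C v0 i).Adj := by
      rw [List.isChain_map]
      refine (List.IsChain.iff_mem.1 hL).imp fun x y ⟨hx, hy, hxy⟩ => ?_
      rw [hf x hx, hf y hy]
      exact hxy
    rw [List.isChain_append, List.isChain_cons]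
    refine ⟨⟨fun y hy => ?_, hchain⟩, by simp, fun y hy z hz => ?_⟩
    · simp only [List.head?_map, ha, Option.map_some, Option.mem_def, Option.some.injEq] at hy
      rw [← hy, hf a haL]
      exact hda
    · simp only [List.getLast?_cons, List.getLast?_map, hb, Option.map_some, Option.getD_some,
        Option.mem_def, Option.some.injEq] at hy
      simp only [List.head?_cons, Option.mem_def, Option.some.injEq] at hz
      rw [← hy, ← hz, hf b hbL]
      exact hdb

end VirtualExtension

namespace IsBFSParent

variable {G : SimpleGraph V} {v0 : V} {par : V → V} {C : Set V} {i j : ℕ}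

theorem exists_isBiconnectedSet_virtualExtension_of_adj (hT : IsBFSParent G v0 par)
    (hCA : ∀ v ∈ C, i ≤ G.dist v0 v ∧ G.dist v0 v ≤ j)
    (hmax : ∀ u ∈ C, ∀ w : V, (i ≤ G.dist v0 w ∧ G.dist v0 w ≤ j) → G.Adj u w → w ∈ C)
    {u v : C} (huv : G.Adj u v)
    (hanc : ancestorAtDepth G v0 par i u ≠ ancestorAtDepth G v0 par i v) :
    ∃ S, IsBiconnectedSet (virtualExtension G C v0 i) S ∧ none ∈ S ∧ some u ∈ S ∧ some v ∈ S := by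
  set Lu := ancestorList G v0 par i u
  set Lv := ancestorList G v0 par i v
  -- the path `ancestorAtDepth u, …, par u, u, v, par v, …, ancestorAtDepth v`
  set L := Lu.reverse ++ Lv
  have hmemC : ∀ y ∈ L, y ∈ C := by
    intro y hy
    rcases List.mem_append.1 hy with hy | hy
    · exact hT.mem_of_mem_ancestorList hmax u.2 (hCA u u.2).2 (hCA u u.2).1
        (List.mem_reverse.1 hy)
    · exact hT.mem_of_mem_ancestorList hmax v.2 (hCA v v.2).2 (hCA v v.2).1 hy
  have hnd : L.Nodup := by
    refine List.nodup_append.2 ⟨List.nodup_reverse.2 hT.nodup_ancestorList,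
      hT.nodup_ancestorList, fun a ha b hb hab => hanc ?_⟩
    rw [← hT.ancestorAtDepth_of_mem_ancestorList (hCA u u.2).1 (List.mem_reverse.1 ha), hab,
      hT.ancestorAtDepth_of_mem_ancestorList (hCA v v.2).1 hb]
  have hchain : L.IsChain G.Adj := by
    refine List.isChain_append.2 ⟨List.isChain_reverse.2
      (hT.isChain_ancestorList.imp fun _ _ h => h.symm), hT.isChain_ancestorList,
      fun x hx y hy => ?_⟩
    simp only [List.getLast?_reverse, Lu, Lv, head?_ancestorList, Option.mem_def,
      Option.some.injEq] at hx hy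
    rw [← hx, ← hy]
    exact huv
  have hhead : L.head? = some (ancestorAtDepth G v0 par i u) := by
    simp [L, Lu, List.head?_reverse, getLast?_ancestorList]
  have hlast : L.getLast? = some (ancestorAtDepth G v0 par i v) := by
    simp [L, Lv, getLast?_ancestorList]
  have hS := isBiconnectedSet_virtualExtension_of_path hmemC hnd hchain hhead hlast
    (hT.dist_ancestorAtDepth (hCA u u.2).1) (hT.dist_ancestorAtDepth (hCA v v.2).1)
  have hsome : ∀ x : C, (x : V) ∈ L →
      some x ∈ none :: L.map (Function.partialInv Subtype.val) :=
    fun x hx => List.mem_cons_of_mem _ (List.mem_map.2 ⟨x, hx, partialInv_val_of_mem x.2⟩)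
  have huL : (u : V) ∈ L :=
    List.mem_append_left _ (List.mem_reverse.2 (List.mem_of_mem_head? head?_ancestorList))
  have hvL : (v : V) ∈ L := List.mem_append_right _ (List.mem_of_mem_head? head?_ancestorList)
  exact ⟨_, hS, List.mem_cons_self, hsome u huL, hsome v hvL⟩

theorem ancestorAtDepth_eq_of_adj_of_isBlock (hT : IsBFSParent G v0 par)
    (hCA : ∀ v ∈ C, i ≤ G.dist v0 v ∧ G.dist v0 v ≤ j)
    (hmax : ∀ u ∈ C, ∀ w : V, (i ≤ G.dist v0 w ∧ G.dist v0 w ≤ j) → G.Adj u w → w ∈ C)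
    {B : Set (Option C)} (hB : IsBlock (virtualExtension G C v0 i) B) (hvB : none ∉ B)
    {u v : C} (hu : some u ∈ B) (hv : some v ∈ B) (huv : G.Adj u v) :
    ancestorAtDepth G v0 par i u = ancestorAtDepth G v0 par i v := by
  by_contra hanc
  obtain ⟨S, hS, hnone, huS, hvS⟩ :=
    hT.exists_isBiconnectedSet_virtualExtension_of_adj hCA hmax huv hanc
  have huv' : some u ≠ some v := fun h => G.ne_of_adj huv (by rw [Option.some.inj h])
  exact hvB (hB.subset_of_isBiconnectedSet hS ⟨hu, huS⟩ ⟨hv, hvS⟩ huv' hnone)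

end IsBFSParent

theorem block_descends_from_single_w_general {V : Type*}
    (G : SimpleGraph V) (v0 : V) (par : V → V)
    (hparAdj : ∀ v : V, v ≠ v0 → G.Adj (par v) v)
    (hparDepth : ∀ v : V, v ≠ v0 → G.dist v0 (par v) + 1 = G.dist v0 v)
    (i r : ℕ) (C : Set V)
    (hCA : ∀ v ∈ C, i ≤ G.dist v0 v ∧ G.dist v0 v ≤ i + 2 * r)
    (hmax : ∀ u ∈ C, ∀ w : V, (i ≤ G.dist v0 w ∧ G.dist v0 w ≤ i + 2 * r) →
      G.Adj u w → w ∈ C)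
    (B : Set (Option C))
    (hB : IsBlock (virtualExtension G C v0 i) B)
    (hvB : none ∉ B) :
    ∃ w ∈ C, G.dist v0 w = i ∧
      ∀ x : C, some x ∈ B → ∃ n : ℕ, par^[n] (x : V) = w := by
  have hT : IsBFSParent G v0 par := ⟨hparAdj, hparDepth⟩
  set A := ancestorAtDepth G v0 par i
  have hconst : ∀ o ∈ B, ∀ o' ∈ B, o.map (A ∘ Subtype.val) = o'.map (A ∘ Subtype.val) := by
    refine fun o ho o' ho' => eq_of_preconnected_induce hB.1.1.preconnected ?_ ho ho'
    rintro (_ | x) hx (_ | y) hy hxy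
    · exact absurd hx hvB
    · exact absurd hx hvB
    · exact absurd hy hvB
    · exact congrArg some (hT.ancestorAtDepth_eq_of_adj_of_isBlock hCA hmax hB hvB hx hy hxy)
  obtain ⟨⟨_ | x₀, hx₀⟩⟩ := hB.1.1.nonempty
  · exact absurd hx₀ hvB
  have hi := (hCA _ x₀.2).1
  refine ⟨A x₀, hT.iterate_mem hmax x₀.2 (hCA _ x₀.2).2 (Nat.sub_add_cancel hi).le,
    hT.dist_ancestorAtDepth hi, fun x hx => ⟨G.dist v0 x - i, ?_⟩⟩
  exact Option.some.inj (hconst _ hx _ hx₀)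

/-- let `C` be a connected component of the annulus `G[i,i+2r]` of a
connected graph `G` with BFS tree rooted at `v0` given by the parent function `par`
(so the depth of a vertex equals its distance from `v0`), and let `C*` be `C` with a
virtual vertex attached to the vertices of `C` at distance `i` from `v0`. Then every
block `B` of `C*` not containing the virtual vertex has all its vertices descendants
(under iterated `par`) of a single vertex `w` of `C` at distance `i` from `v0`. -/
theorem block_descends_from_single_w {V : Type*} [Fintype V]
    (G : SimpleGraph V) (hG : G.Connected) (v0 : V) (par : V → V)
    (hpar0 : par v0 = v0)
    (hparAdj : ∀ v : V, v ≠ v0 → G.Adj (par v) v)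
    (hparDepth : ∀ v : V, v ≠ v0 → G.dist v0 (par v) + 1 = G.dist v0 v)
    (hparRoot : ∀ v : V, ∃ n : ℕ, par^[n] v = v0)
    (i r : ℕ) (C : Set V)
    (hCA : ∀ v ∈ C, i ≤ G.dist v0 v ∧ G.dist v0 v ≤ i + 2 * r)
    (hne : C.Nonempty)
    (hconn : (G.induce C).Connected)
    (hmax : ∀ u ∈ C, ∀ w : V, (i ≤ G.dist v0 w ∧ G.dist v0 w ≤ i + 2 * r) →
      G.Adj u w → w ∈ C)
    (B : Set (Option C))
    (hB : IsBlock (virtualExtension G C v0 i) B)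
    (hvB : none ∉ B) :
    ∃ w ∈ C, G.dist v0 w = i ∧
      ∀ x : C, some x ∈ B → ∃ n : ℕ, par^[n] (x : V) = w :=
  block_descends_from_single_w_general G v0 par hparAdj hparDepth i r C hCA hmax B hB hvB
end
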